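/- arXiv:math/0512537 — 3 statements merged into one kernel-verified Lean document; each statement's English description precedes it below -/
import Mathlib

section
/- Fix integers M ≥ 1 and N ≥ 1 and let Γ be any connected set of k M-squares (connected through the 8-neighbor square adjacency). Then one can select a family of pairwise disjoint 3M-squares, each being the union of an M-square of Γ with its eight neighboring M-squares, of cardinality at least k/15. -/
/-- 8-neighbor (king-move) adjacency of `M`-squares, indexed by `ℤ²`. -/
def KingAdj (a b : ℤ × ℤ) : Prop := a ≠ b ∧ |a.1 - b.1| ≤ 1 ∧ |a.2 - b.2| ≤ 1

/-- A finite set of `M`-squares (indexed by `ℤ²`) is connected through the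
8-neighbor square adjacency. -/
def SquareConnected (Γ : Finset (ℤ × ℤ)) : Prop :=
  ∀ a ∈ Γ, ∀ b ∈ Γ,
    Relation.ReflTransGen (fun x y => x ∈ Γ ∧ y ∈ Γ ∧ KingAdj x y) a b

/-- The `3M`-square centered at the `M`-square indexed by `w`: the union of
`B_M(w)` with its eight neighboring `M`-squares. -/
def BigSquare (M : ℕ) (w : ℤ × ℤ) : Set (ℤ × ℤ) :=
  {p | (M : ℤ) * (w.1 - 1) ≤ p.1 ∧ p.1 < (M : ℤ) * (w.1 + 2) ∧
       (M : ℤ) * (w.2 - 1) ≤ p.2 ∧ p.2 < (M : ℤ) * (w.2 + 2)}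

/-- From any connected set `Γ` of `k` `M`-squares one can select at least `k/15`
squares of `Γ` whose associated `3M`-squares are pairwise disjoint. -/
theorem stmt8 (M : ℕ) (hM : 1 ≤ M) (Γ : Finset (ℤ × ℤ)) (k : ℕ)
    (hk : Γ.card = k) (hconn : SquareConnected Γ) :
    ∃ S ⊆ Γ,
      (S : Set (ℤ × ℤ)).Pairwise (fun w w' => Disjoint (BigSquare M w) (BigSquare M w')) ∧
      k ≤ 15 * S.card := by
  classical
  rcases Nat.eq_zero_or_pos k with h0 | hpos
  · exact ⟨∅, by simp, by simp, by simp [h0]⟩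
  set f : ℤ × ℤ → ℤ × ℤ := fun w => (w.1 % 3, w.2 % 3) with hf
  set t : Finset (ℤ × ℤ) := ({0, 1, 2} : Finset ℤ) ×ˢ ({0, 1, 2} : Finset ℤ) with ht
  have hmaps : ∀ a ∈ Γ, f a ∈ t := by
    intro a _
    simp only [ht, hf, Finset.mem_product, Finset.mem_insert, Finset.mem_singleton]
    omega
  have htc : t.card = 9 := by decide
  have hlt : t.card * ((k - 1) / 9) < Γ.card := by
    rw [htc, hk]; omega
  obtain ⟨y, _, hfib⟩ := Finset.exists_lt_card_fiber_of_mul_lt_card_of_maps_to hmaps hlt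
  refine ⟨Γ.filter (fun x => f x = y), Finset.filter_subset _ _, ?_, by omega⟩
  intro w hw w' hw' hne
  simp only [Finset.coe_filter, Set.mem_setOf_eq] at hw hw'
  have hMpos : (0 : ℤ) < M := by exact_mod_cast hM
  have hw1 : w.1 % 3 = w'.1 % 3 := by
    have := hw.2.trans hw'.2.symm
    simpa [hf, Prod.ext_iff] using congrArg Prod.fst this
  have hw2 : w.2 % 3 = w'.2 % 3 := by
    have := hw.2.trans hw'.2.symm
    simpa [hf, Prod.ext_iff] using congrArg Prod.snd this
  rw [Set.disjoint_left]
  rintro p ⟨h1, h2, h3, h4⟩ ⟨h5, h6, h7, h8⟩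
  have e1 : w.1 - 1 < w'.1 + 2 := lt_of_mul_lt_mul_left (lt_of_le_of_lt h1 h6) hMpos.le
  have e2 : w'.1 - 1 < w.1 + 2 := lt_of_mul_lt_mul_left (lt_of_le_of_lt h5 h2) hMpos.le
  have e3 : w.2 - 1 < w'.2 + 2 := lt_of_mul_lt_mul_left (lt_of_le_of_lt h3 h8) hMpos.le
  have e4 : w'.2 - 1 < w.2 + 2 := lt_of_mul_lt_mul_left (lt_of_le_of_lt h7 h4) hMpos.le
  exact hne (Prod.ext (by omega) (by omega))
end

section
/- Suppose random variables satisfy: b_{0,n} ≤ a_{0,n} always; P(a_{0,2n} ≤ 2nμ − √2·x·(2n)^{1/2}) ≤ C e^{−cx}; and there is an event of probability ≥ 1 − Ce^{−cn} on which the optimal point-to-line path exits at one of at most 2(M+1)n + 1 heights, with the events {b_{0,n} ≤ nμ − x√n, exit height = i} for the left half-plane and the corresponding mirrored events for the right half-plane being independent with equal probabilities and jointly implying a_{0,2n} ≤ 2nμ − 2x√n. Then P(b_{0,n} ≤ nμ − x√n)² ≤ C'n² e^{−c√2 x} + C' e^{−c'n}, hence P(|b_{0,n} − nμ| ≥ x√n)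 ≤ C₁ e^{−C₂ x} for n^{0.01} ≤ x ≤ n^{0.99}. -/
open MeasureTheory ProbabilityTheory

private lemma stmt14_pow_le_exp {β : ℝ} (hβ : 0 < β) (t : ℝ) (ht : 0 ≤ t) :
    t ^ (100 : ℕ) ≤ (Nat.factorial 100 : ℝ) / β ^ 100 * Real.exp (β * t) := by
  have hbt : 0 ≤ β * t := mul_nonneg hβ.le ht
  have h1 : (β * t) ^ 100 / (Nat.factorial 100 : ℝ) ≤ Real.exp (β * t) := by
    refine le_trans ?_ (Real.sum_le_exp_of_nonneg hbt 101)
    exact Finset.single_le_sum (f := fun i => (β * t) ^ i / (Nat.factorial i : ℝ))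
      (fun i _ => by positivity) (Finset.mem_range.mpr (by norm_num))
  have hfac : (0:ℝ) < (Nat.factorial 100 : ℝ) := by positivity
  have hb : (0:ℝ) < β ^ 100 := by positivity
  have h2 : β ^ 100 * t ^ 100 ≤ (Nat.factorial 100 : ℝ) * Real.exp (β * t) := by
    have h3 := (div_le_iff₀ hfac).mp h1
    rw [mul_pow] at h3
    linarith
  calc t ^ 100 = (β ^ 100 * t ^ 100) / β ^ 100 := by field_simp
    _ ≤ ((Nat.factorial 100 : ℝ) * Real.exp (β * t)) / β ^ 100 := by gcongr
    _ = (Nat.factorial 100 : ℝ) / β ^ 100 * Real.exp (β * t) := by ring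

private lemma stmt14_sq4 (u v : ENNReal) : (u + v) * (u + v) ≤ 4 * (u * u) + 4 * (v * v) := by
  have hm : u + v ≤ 2 * max u v := by
    rw [two_mul]; exact add_le_add (le_max_left u v) (le_max_right u v)
  calc (u + v) * (u + v) ≤ (2 * max u v) * (2 * max u v) := mul_le_mul' hm hm
    _ = 4 * (max u v * max u v) := by ring
    _ ≤ 4 * (u * u) + 4 * (v * v) := by
        rcases max_choice u v with hh | hh <;> rw [hh]
        · exact le_add_right le_rfl
        · exact le_add_left le_rfl

set_option maxHeartbeats 1600000 in
/-- Abstract symmetrization step: from `b ≤ a`, concentration for `a`, a bound on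
the number of possible exit heights, and independence of the two half-plane events,
deduce `P(b_{0,n} ≤ nμ − x√n)² ≤ C'n²e^{−c√2 x} + C'e^{−c'n}`, and hence
`P(|b_{0,n} − nμ| ≥ x√n) ≤ C₁ e^{−C₂ x}` for `n^{0.01} ≤ x ≤ n^{0.99}`. -/
theorem stmt14 {Ω : Type*} [MeasurableSpace Ω] (P : Measure Ω)
    [IsProbabilityMeasure P]
    (a b b' : ℕ → Ω → ℝ) (h h' : ℕ → Ω → ℤ) (μ M C c : ℝ)
    (hM : 0 < M) (hC : 0 < C) (hc : 0 < c)
    -- b ≤ a always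
    (hba : ∀ n ω, b n ω ≤ a n ω)
    -- concentration for the point-to-point time a
    (haDev : ∀ (n : ℕ) (x : ℝ), (n : ℝ) ^ (0.01 : ℝ) ≤ x → x ≤ (n : ℝ) ^ (0.99 : ℝ) →
      P {ω | x * Real.sqrt n ≤ |a n ω - μ * n|} ≤ ENNReal.ofReal (C * Real.exp (-c * x)))
    -- lower tail for a at 2n, at scale √2·x·√(2n)
    (hA : ∀ (n : ℕ) (x : ℝ), 0 ≤ x →
      P {ω | a (2 * n) ω ≤ 2 * n * μ - Real.sqrt 2 * x * Real.sqrt (2 * n)} ≤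
        ENNReal.ofReal (C * Real.exp (-c * x)))
    -- the exit height is among at most 2(M+1)n + 1 values, up to an exponentially small event
    (hG : ∀ n : ℕ,
      P {ω | ¬ (|h n ω| : ℝ) ≤ (M + 1) * n} ≤ ENNReal.ofReal (C * Real.exp (-c * n)))
    -- the mirrored events are independent, equiprobable, and jointly force a small a_{0,2n}
    (hind : ∀ (n : ℕ) (x : ℝ) (i : ℤ),
      P ({ω | b n ω ≤ n * μ - x * Real.sqrt n ∧ h n ω = i} ∩
         {ω | b' n ω ≤ n * μ - x * Real.sqrt n ∧ h' n ω = i}) =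
      P {ω | b n ω ≤ n * μ - x * Real.sqrt n ∧ h n ω = i} *
      P {ω | b' n ω ≤ n * μ - x * Real.sqrt n ∧ h' n ω = i})
    (heq : ∀ (n : ℕ) (x : ℝ) (i : ℤ),
      P {ω | b n ω ≤ n * μ - x * Real.sqrt n ∧ h n ω = i} =
      P {ω | b' n ω ≤ n * μ - x * Real.sqrt n ∧ h' n ω = i})
    (himp : ∀ (n : ℕ) (x : ℝ) (i : ℤ),
      {ω | b n ω ≤ n * μ - x * Real.sqrt n ∧ h n ω = i} ∩
      {ω | b' n ω ≤ n * μ - x * Real.sqrt n ∧ h' n ω = i} ⊆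
      {ω | a (2 * n) ω ≤ 2 * n * μ - 2 * x * Real.sqrt n}) :
    ∃ C' > (0 : ℝ), ∃ c' > (0 : ℝ), ∃ C₁ > (0 : ℝ), ∃ C₂ > (0 : ℝ),
      ∀ (n : ℕ) (x : ℝ), (n : ℝ) ^ (0.01 : ℝ) ≤ x → x ≤ (n : ℝ) ^ (0.99 : ℝ) →
        (P {ω | b n ω ≤ n * μ - x * Real.sqrt n}) ^ 2 ≤
          ENNReal.ofReal (C' * n ^ 2 * Real.exp (-c * Real.sqrt 2 * x)) +
            ENNReal.ofReal (C' * Real.exp (-c' * n)) ∧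
        P {ω | x * Real.sqrt n ≤ |b n ω - n * μ|} ≤
          ENNReal.ofReal (C₁ * Real.exp (-C₂ * x)) := by
  classical
  obtain ⟨A0, hA0pos, hA0⟩ :
      ∃ A0 : ℝ, 0 < A0 ∧ ∀ t : ℝ, 0 ≤ t → t ^ (100 : ℕ) ≤ A0 * Real.exp (c / 8 * t) :=
    ⟨(Nat.factorial 100 : ℝ) / (c / 8) ^ 100, by positivity,
      fun t ht => stmt14_pow_le_exp (by positivity) t ht⟩
  set C' : ℝ := 4 * (2 * M + 5) ^ 2 * C + 4 * C + 1 with hC'def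
  have hC'pos : 0 < C' := by positivity
  have hC'1 : 1 ≤ C' := by nlinarith [sq_nonneg (2 * M + 5)]
  set C₁ : ℝ := Real.sqrt C' * A0 + Real.sqrt C' + C + 1 with hC₁def
  have hsC'pos : 0 < Real.sqrt C' := Real.sqrt_pos.mpr hC'pos
  have hC₁pos : 0 < C₁ := by positivity
  have hC₁1 : 1 ≤ C₁ := by nlinarith [mul_nonneg hsC'pos.le hA0pos.le]
  have hC'a : 4 * (2 * M + 5) ^ 2 * C ≤ C' := by nlinarith
  have hC'b : 4 * C ≤ C' := by nlinarith [sq_nonneg (2 * M + 5)]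
  have hC₁a : Real.sqrt C' * A0 + Real.sqrt C' + C ≤ C₁ := by rw [hC₁def]; linarith
  clear_value C' C₁
  refine ⟨C', hC'pos, c, hc, C₁, hC₁pos, c / 4, by positivity, ?_⟩
  intro n x hx1 hx2
  rcases Nat.eq_zero_or_pos n with hn0 | hn
  · subst hn0
    have e1 : ((0 : ℕ) : ℝ) ^ (0.01 : ℝ) = 0 := by
      rw [Nat.cast_zero]; exact Real.zero_rpow (by norm_num)
    have e2 : ((0 : ℕ) : ℝ) ^ (0.99 : ℝ) = 0 := by
      rw [Nat.cast_zero]; exact Real.zero_rpow (by norm_num)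
    have hx0 : x = 0 := le_antisymm (e2 ▸ hx2) (e1 ▸ hx1)
    subst hx0
    constructor
    · have h1 : (P {ω | b 0 ω ≤ (0 : ℕ) * μ - 0 * Real.sqrt (0 : ℕ)}) ^ 2 ≤ 1 := by
        calc (P _) ^ 2 ≤ 1 ^ 2 := pow_le_pow_left' prob_le_one 2
          _ = 1 := one_pow 2
      refine h1.trans ?_
      refine le_trans ?_ (le_add_self)
      rw [show (-c * ((0:ℕ):ℝ)) = 0 by norm_num, Real.exp_zero, mul_one]
      exact ENNReal.one_le_ofReal.mpr hC'1
    · refine le_trans prob_le_one ?_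
      rw [show (-(c / 4) * (0:ℝ)) = 0 by ring, Real.exp_zero, mul_one]
      exact ENNReal.one_le_ofReal.mpr hC₁1
  -- main case : 1 ≤ n
  have hn1 : (1 : ℝ) ≤ (n : ℝ) := by exact_mod_cast hn
  have hn0' : (0 : ℝ) ≤ (n : ℝ) := by linarith
  have hone : (1 : ℝ) ≤ (n : ℝ) ^ (0.01 : ℝ) := by
    calc (1:ℝ) = (1:ℝ) ^ (0.01:ℝ) := (Real.one_rpow _).symm
      _ ≤ (n : ℝ) ^ (0.01 : ℝ) := Real.rpow_le_rpow zero_le_one hn1 (by norm_num)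
  have hx1' : (1 : ℝ) ≤ x := le_trans hone hx1
  have hx0 : (0 : ℝ) ≤ x := by linarith
  have hxn : x ≤ (n : ℝ) := by
    refine le_trans hx2 ?_
    calc (n:ℝ) ^ (0.99:ℝ) ≤ (n:ℝ) ^ (1:ℝ) :=
          Real.rpow_le_rpow_of_exponent_le hn1 (by norm_num)
      _ = (n : ℝ) := Real.rpow_one _
  have hnx100 : (n : ℝ) ≤ x ^ (100 : ℕ) := by
    have h1 : (n : ℝ) = ((n : ℝ) ^ (0.01 : ℝ)) ^ (100 : ℕ) := by
      rw [← Real.rpow_natCast ((n:ℝ) ^ (0.01:ℝ)) 100, ← Real.rpow_mul hn0']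
      norm_num
    rw [h1]
    exact pow_le_pow_left₀ (by positivity) hx1 _
  have hs2 : (3 / 4 : ℝ) ≤ Real.sqrt 2 := by
    nlinarith [Real.sq_sqrt (show (0:ℝ) ≤ 2 by norm_num), Real.sqrt_nonneg 2]
  have hs2' : (0 : ℝ) ≤ Real.sqrt 2 := Real.sqrt_nonneg 2
  -- the height pigeonhole set
  set K : ℤ := ⌈(M + 1) * (n : ℝ)⌉ with hKdef
  have hK0 : 0 ≤ K := Int.ceil_nonneg (by positivity)
  set S : Finset ℤ := Finset.Icc (-K) K with hSdef
  have hSne : S.Nonempty := ⟨0, by simp [hSdef, Finset.mem_Icc]; omega⟩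
  set E : ℤ → Set Ω := fun i => {ω | b n ω ≤ n * μ - x * Real.sqrt n ∧ h n ω = i} with hEdef
  set E' : ℤ → Set Ω := fun i => {ω | b' n ω ≤ n * μ - x * Real.sqrt n ∧ h' n ω = i} with hE'def
  set G : Set Ω := {ω | ¬ (|h n ω| : ℝ) ≤ (M + 1) * n} with hGdef
  set B : Set Ω := {ω | b n ω ≤ n * μ - x * Real.sqrt n} with hBdef
  have hcover : B ⊆ G ∪ ⋃ i ∈ S, E i := by
    intro ω hω
    by_cases hg : ((|h n ω| : ℝ) ≤ (M + 1) * n)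
    · right
      refine Set.mem_biUnion ?_ ⟨hω, rfl⟩
      have hceil : (|h n ω| : ℝ) ≤ (K : ℝ) := le_trans hg (Int.le_ceil _)
      have : |h n ω| ≤ K := by exact_mod_cast hceil
      refine Finset.mem_Icc.mpr ⟨?_, ?_⟩
      · linarith [neg_abs_le (h n ω)]
      · linarith [le_abs_self (h n ω)]
    · left; exact hg
  have hQuv : P B ≤ P G + ∑ i ∈ S, P (E i) := by
    refine (measure_mono hcover).trans ?_
    refine (measure_union_le _ _).trans ?_
    exact add_le_add le_rfl (measure_biUnion_finset_le S E)
  obtain ⟨j, hjS, hjmax⟩ := Finset.exists_max_image S (fun i => P (E i)) hSne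
  have hsum : ∑ i ∈ S, P (E i) ≤ (S.card : ENNReal) * P (E j) := by
    simpa [nsmul_eq_mul] using Finset.sum_le_card_nsmul S (fun i => P (E i)) (P (E j)) hjmax
  have hcardR : (S.card : ℝ) ≤ (2 * M + 5) * n := by
    have h1 : S.card = (K + 1 - -K).toNat := Int.card_Icc _ _
    have h2 : (S.card : ℝ) = 2 * (K : ℝ) + 1 := by
      have h3 : (((K + 1 - -K).toNat : ℤ) : ℝ) = ((2 * K + 1 : ℤ) : ℝ) := by
        rw [Int.toNat_of_nonneg (by omega)]; norm_cast; ring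
      rw [h1]
      push_cast at h3 ⊢
      linarith
    have hKle : (K : ℝ) < (M + 1) * n + 1 := Int.ceil_lt_add_one _
    nlinarith
  -- bound on the best height's probability squared
  have hcast2n : ((2 * n : ℕ) : ℝ) = 2 * (n : ℝ) := by push_cast; ring
  have hsqrt2n : Real.sqrt ((2 * n : ℕ) : ℝ) = Real.sqrt 2 * Real.sqrt n := by
    rw [hcast2n, Real.sqrt_mul (by norm_num)]
  have h22 : Real.sqrt 2 * Real.sqrt 2 = 2 := Real.mul_self_sqrt (by norm_num)
  have hrange1 : ((2 * n : ℕ) : ℝ) ^ (0.01 : ℝ) ≤ Real.sqrt 2 * x := by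
    rw [hcast2n, Real.mul_rpow (by norm_num) hn0']
    have h2r : (2:ℝ) ^ (0.01:ℝ) ≤ Real.sqrt 2 := by
      rw [Real.sqrt_eq_rpow]
      exact Real.rpow_le_rpow_of_exponent_le (by norm_num) (by norm_num)
    exact mul_le_mul h2r hx1 (by positivity) hs2'
  have hrange2 : Real.sqrt 2 * x ≤ ((2 * n : ℕ) : ℝ) ^ (0.99 : ℝ) := by
    rw [hcast2n, Real.mul_rpow (by norm_num) hn0']
    have h2r : Real.sqrt 2 ≤ (2:ℝ) ^ (0.99:ℝ) := by
      rw [Real.sqrt_eq_rpow]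
      exact Real.rpow_le_rpow_of_exponent_le (by norm_num) (by norm_num)
    exact mul_le_mul h2r hx2 hx0 (by positivity)
  have hincl2 : {ω : Ω | a (2 * n) ω ≤ 2 * (n : ℝ) * μ - 2 * x * Real.sqrt n} ⊆
      {ω : Ω | (Real.sqrt 2 * x) * Real.sqrt ((2 * n : ℕ) : ℝ) ≤ |a (2 * n) ω - μ * ((2 * n : ℕ) : ℝ)|} := by
    intro ω hω
    simp only [Set.mem_setOf_eq] at hω ⊢
    rw [hsqrt2n, hcast2n]
    have heqq : Real.sqrt 2 * x * (Real.sqrt 2 * Real.sqrt n) = 2 * x * Real.sqrt n := by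
      linear_combination x * Real.sqrt (n:ℝ) * h22
    rw [heqq]
    refine le_abs.mpr (Or.inr ?_)
    have hμ : μ * (2 * (n:ℝ)) = 2 * (n:ℝ) * μ := by ring
    linarith
  have hEj2 : P (E j) * P (E j) ≤ ENNReal.ofReal (C * Real.exp (-c * Real.sqrt 2 * x)) := by
    have hEE : P (E j) = P (E' j) := heq n x j
    have step : P (E j ∩ E' j) = P (E j) * P (E' j) := hind n x j
    have step2 : P (E j) * P (E j) = P (E j ∩ E' j) := by rw [step, hEE]
    rw [step2]
    refine le_trans (measure_mono (himp n x j)) ?_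
    refine le_trans (measure_mono (by
      refine subset_trans ?_ hincl2
      intro ω hω
      simp only [Set.mem_setOf_eq] at hω ⊢
      push_cast at hω ⊢
      linarith)) ?_
    refine le_trans (haDev (2 * n) (Real.sqrt 2 * x) hrange1 hrange2) ?_
    rw [show -c * (Real.sqrt 2 * x) = -c * Real.sqrt 2 * x from by ring]
  have hGle : P G ≤ ENNReal.ofReal (C * Real.exp (-c * (n:ℝ))) := hG n
  clear_value K S E E' G B
  -- Part 1
  have hucard : (S.card : ENNReal) = ENNReal.ofReal (S.card : ℝ) := by
    simp [ENNReal.ofReal_natCast]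
  have hvv : (∑ i ∈ S, P (E i)) * (∑ i ∈ S, P (E i)) ≤
      ENNReal.ofReal ((S.card : ℝ) ^ 2 * (C * Real.exp (-c * Real.sqrt 2 * x))) := by
    calc (∑ i ∈ S, P (E i)) * (∑ i ∈ S, P (E i))
        ≤ ((S.card : ENNReal) * P (E j)) * ((S.card : ENNReal) * P (E j)) :=
          mul_le_mul' hsum hsum
      _ = (S.card : ENNReal) ^ 2 * (P (E j) * P (E j)) := by ring
      _ ≤ (S.card : ENNReal) ^ 2 * ENNReal.ofReal (C * Real.exp (-c * Real.sqrt 2 * x)) :=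
          mul_le_mul_right hEj2 _
      _ = ENNReal.ofReal ((S.card : ℝ) ^ 2 * (C * Real.exp (-c * Real.sqrt 2 * x))) := by
          rw [hucard, ← ENNReal.ofReal_pow (Nat.cast_nonneg _),
            ← ENNReal.ofReal_mul (pow_nonneg (Nat.cast_nonneg _) 2)]
  have huu : P G * P G ≤ ENNReal.ofReal (C * Real.exp (-c * n)) := by
    calc P G * P G ≤ ENNReal.ofReal (C * Real.exp (-c * n)) * 1 :=
          mul_le_mul' hGle prob_le_one
      _ = ENNReal.ofReal (C * Real.exp (-c * n)) := mul_one _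
  have hpart1 : (P B) ^ 2 ≤
      ENNReal.ofReal (C' * (n:ℝ) ^ 2 * Real.exp (-c * Real.sqrt 2 * x)) +
        ENNReal.ofReal (C' * Real.exp (-c * n)) := by
    have h4 : (P B) ^ 2 ≤ 4 * (P G * P G) + 4 * ((∑ i ∈ S, P (E i)) * (∑ i ∈ S, P (E i))) := by
      rw [pow_two]
      exact (mul_le_mul' hQuv hQuv).trans (stmt14_sq4 _ _)
    refine h4.trans ?_
    have hterm1 : 4 * ((∑ i ∈ S, P (E i)) * (∑ i ∈ S, P (E i))) ≤
        ENNReal.ofReal (C' * (n:ℝ) ^ 2 * Real.exp (-c * Real.sqrt 2 * x)) := by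
      calc 4 * ((∑ i ∈ S, P (E i)) * (∑ i ∈ S, P (E i)))
          ≤ 4 * ENNReal.ofReal ((S.card : ℝ) ^ 2 * (C * Real.exp (-c * Real.sqrt 2 * x))) :=
            mul_le_mul_right hvv _
        _ = ENNReal.ofReal (4 * ((S.card : ℝ) ^ 2 * (C * Real.exp (-c * Real.sqrt 2 * x)))) := by
            rw [show (4:ENNReal) = ENNReal.ofReal (4:ℝ) from by norm_num,
              ← ENNReal.ofReal_mul (by norm_num)]
        _ ≤ ENNReal.ofReal (C' * (n:ℝ) ^ 2 * Real.exp (-c * Real.sqrt 2 * x)) := by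
            refine ENNReal.ofReal_le_ofReal ?_
            have hec : (0:ℝ) ≤ Real.exp (-c * Real.sqrt 2 * x) := (Real.exp_pos _).le
            calc 4 * ((S.card : ℝ) ^ 2 * (C * Real.exp (-c * Real.sqrt 2 * x)))
                ≤ 4 * ((((2 * M + 5)) * (n:ℝ)) ^ 2 * (C * Real.exp (-c * Real.sqrt 2 * x))) := by
                  have hcard2 : (S.card : ℝ) ^ 2 ≤ ((2 * M + 5) * n) ^ 2 :=
                    pow_le_pow_left₀ (by positivity) hcardR _
                  have := mul_le_mul_of_nonneg_right hcard2 (mul_nonneg hC.le hec)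
                  linarith
              _ = (4 * (2 * M + 5) ^ 2 * C) * ((n:ℝ) ^ 2 * Real.exp (-c * Real.sqrt 2 * x)) := by
                  ring
              _ ≤ C' * ((n:ℝ) ^ 2 * Real.exp (-c * Real.sqrt 2 * x)) :=
                  mul_le_mul_of_nonneg_right hC'a (by positivity)
              _ = C' * (n:ℝ) ^ 2 * Real.exp (-c * Real.sqrt 2 * x) := by ring
    have hterm2 : 4 * (P G * P G) ≤ ENNReal.ofReal (C' * Real.exp (-c * n)) := by
      calc 4 * (P G * P G) ≤ 4 * ENNReal.ofReal (C * Real.exp (-c * n)) :=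
            mul_le_mul_right huu _
        _ = ENNReal.ofReal (4 * (C * Real.exp (-c * n))) := by
            rw [show (4:ENNReal) = ENNReal.ofReal (4:ℝ) from by norm_num,
              ← ENNReal.ofReal_mul (by norm_num)]
        _ ≤ ENNReal.ofReal (C' * Real.exp (-c * n)) := by
            refine ENNReal.ofReal_le_ofReal ?_
            have h1 : 4 * (C * Real.exp (-c * (n:ℝ))) = (4 * C) * Real.exp (-c * (n:ℝ)) := by ring
            rw [h1]
            exact mul_le_mul_of_nonneg_right hC'b (Real.exp_pos _).le
    calc 4 * (P G * P G) + 4 * ((∑ i ∈ S, P (E i)) * (∑ i ∈ S, P (E i)))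
        ≤ ENNReal.ofReal (C' * Real.exp (-c * n)) +
            ENNReal.ofReal (C' * (n:ℝ) ^ 2 * Real.exp (-c * Real.sqrt 2 * x)) :=
          add_le_add hterm2 hterm1
      _ = _ := by rw [add_comm]
  refine ⟨hpart1, ?_⟩
  -- Part 2
  set T1 : ℝ := C' * (n:ℝ) ^ 2 * Real.exp (-c * Real.sqrt 2 * x) with hT1def
  set T2 : ℝ := C' * Real.exp (-c * n) with hT2def
  have hT1nn : 0 ≤ T1 := by positivity
  have hT2nn : 0 ≤ T2 := by positivity
  clear_value T1 T2
  set q : ℝ := (P B).toReal with hqdef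
  have hqnn : 0 ≤ q := ENNReal.toReal_nonneg
  have hqeq : P B = ENNReal.ofReal q := (ENNReal.ofReal_toReal (measure_ne_top P B)).symm
  clear_value q
  have hq2 : q ^ 2 ≤ T1 + T2 := by
    have h1 : ENNReal.ofReal (q ^ 2) ≤ ENNReal.ofReal (T1 + T2) := by
      rw [ENNReal.ofReal_add hT1nn hT2nn]
      calc ENNReal.ofReal (q ^ 2) = (P B) ^ 2 := by
            rw [hqeq, ← ENNReal.ofReal_pow hqnn]
        _ ≤ _ := hpart1
    exact (ENNReal.ofReal_le_ofReal_iff (by positivity)).mp h1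
  clear hpart1 hind heq himp hA hG hcover hQuv hsum hjmax hEj2 hvv huu hucard
  clear hincl2 hrange1 hrange2 hsqrt2n hcast2n hcardR hGle hK0 hSne hSdef hKdef hjS
  have hql : q ≤ Real.sqrt T1 + Real.sqrt T2 := by
    have h1 : q ≤ Real.sqrt (T1 + T2) := by
      have h2 := Real.sqrt_le_sqrt hq2
      rwa [Real.sqrt_sq hqnn] at h2
    refine h1.trans ?_
    have h3 : T1 + T2 ≤ (Real.sqrt T1 + Real.sqrt T2) ^ 2 := by
      have h4 : 0 ≤ Real.sqrt T1 * Real.sqrt T2 :=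
        mul_nonneg (Real.sqrt_nonneg T1) (Real.sqrt_nonneg T2)
      have h5 : (Real.sqrt T1 + Real.sqrt T2) ^ 2 = T1 + 2 * (Real.sqrt T1 * Real.sqrt T2) + T2 := by
        rw [add_sq, Real.sq_sqrt hT1nn, Real.sq_sqrt hT2nn]; ring
      linarith
    calc Real.sqrt (T1 + T2) ≤ Real.sqrt ((Real.sqrt T1 + Real.sqrt T2) ^ 2) :=
          Real.sqrt_le_sqrt h3
      _ = Real.sqrt T1 + Real.sqrt T2 := Real.sqrt_sq (by positivity)
  have hexp_half : ∀ y : ℝ, Real.exp y = Real.exp (y / 2) ^ 2 := by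
    intro y; rw [sq, ← Real.exp_add]; ring_nf
  have hsqC' : Real.sqrt C' ^ 2 = C' := Real.sq_sqrt hC'pos.le
  have hT1b : Real.sqrt T1 ≤ Real.sqrt C' * A0 * Real.exp (-(c / 4) * x) := by
    have hb1 : T1 ≤ (Real.sqrt C' * x ^ (100:ℕ) * Real.exp (-c * Real.sqrt 2 * x / 2)) ^ 2 := by
      rw [hT1def, hexp_half (-c * Real.sqrt 2 * x)]
      have hn2 : (n:ℝ) ^ 2 ≤ (x ^ (100:ℕ)) ^ 2 := pow_le_pow_left₀ hn0' hnx100 2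
      calc C' * (n:ℝ) ^ 2 * Real.exp (-c * Real.sqrt 2 * x / 2) ^ 2
          ≤ C' * (x ^ (100:ℕ)) ^ 2 * Real.exp (-c * Real.sqrt 2 * x / 2) ^ 2 := by
            have := mul_le_mul_of_nonneg_left hn2 hC'pos.le
            exact mul_le_mul_of_nonneg_right this (sq_nonneg _)
        _ = (Real.sqrt C' * x ^ (100:ℕ) * Real.exp (-c * Real.sqrt 2 * x / 2)) ^ 2 := by
            rw [mul_pow, mul_pow, hsqC']
    have hb2 : Real.sqrt T1 ≤ Real.sqrt C' * x ^ (100:ℕ) * Real.exp (-c * Real.sqrt 2 * x / 2) := by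
      calc Real.sqrt T1 ≤ Real.sqrt ((Real.sqrt C' * x ^ (100:ℕ) * Real.exp (-c * Real.sqrt 2 * x / 2)) ^ 2) :=
            Real.sqrt_le_sqrt hb1
        _ = _ := Real.sqrt_sq (by positivity)
    refine hb2.trans ?_
    have hxA : x ^ (100:ℕ) ≤ A0 * Real.exp (c / 8 * x) := hA0 x hx0
    calc Real.sqrt C' * x ^ (100:ℕ) * Real.exp (-c * Real.sqrt 2 * x / 2)
        ≤ Real.sqrt C' * (A0 * Real.exp (c / 8 * x)) * Real.exp (-c * Real.sqrt 2 * x / 2) :=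
          mul_le_mul_of_nonneg_right (mul_le_mul_of_nonneg_left hxA hsC'pos.le)
            (Real.exp_pos _).le
      _ = Real.sqrt C' * A0 * Real.exp (c / 8 * x + -c * Real.sqrt 2 * x / 2) := by
          rw [Real.exp_add]; ring
      _ ≤ Real.sqrt C' * A0 * Real.exp (-(c / 4) * x) := by
          have hps : (0:ℝ) ≤ (c * x) * (Real.sqrt 2 - 3 / 4) :=
            mul_nonneg (mul_nonneg hc.le hx0) (by linarith)
          have hee : c / 8 * x + -c * Real.sqrt 2 * x / 2 ≤ -(c / 4) * x := by nlinarith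
          exact mul_le_mul_of_nonneg_left (Real.exp_le_exp.mpr hee)
            (mul_nonneg hsC'pos.le hA0pos.le)
  have hT2b : Real.sqrt T2 ≤ Real.sqrt C' * Real.exp (-(c / 4) * x) := by
    have hb1 : T2 ≤ (Real.sqrt C' * Real.exp (-c * n / 2)) ^ 2 := by
      rw [hT2def, hexp_half (-c * n), mul_pow, hsqC']
    have hb2 : Real.sqrt T2 ≤ Real.sqrt C' * Real.exp (-c * n / 2) := by
      calc Real.sqrt T2 ≤ Real.sqrt ((Real.sqrt C' * Real.exp (-c * n / 2)) ^ 2) :=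
            Real.sqrt_le_sqrt hb1
        _ = _ := Real.sqrt_sq (by positivity)
    refine hb2.trans ?_
    have hee : -c * (n:ℝ) / 2 ≤ -(c / 4) * x := by nlinarith
    exact mul_le_mul_of_nonneg_left (Real.exp_le_exp.mpr hee) hsC'pos.le
  have hqb : q ≤ (Real.sqrt C' * A0 + Real.sqrt C') * Real.exp (-(c / 4) * x) := by
    calc q ≤ Real.sqrt T1 + Real.sqrt T2 := hql
      _ ≤ Real.sqrt C' * A0 * Real.exp (-(c / 4) * x) + Real.sqrt C' * Real.exp (-(c / 4) * x) :=
          add_le_add hT1b hT2b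
      _ = _ := by ring
  -- the two-sided split
  set U : Set Ω := {ω | x * Real.sqrt n ≤ |a n ω - μ * n|} with hUdef
  have hU : P U ≤ ENNReal.ofReal (C * Real.exp (-c * x)) := haDev n x hx1 hx2
  clear_value U
  have hsplit : {ω : Ω | x * Real.sqrt n ≤ |b n ω - n * μ|} ⊆ B ∪ U := by
    intro ω hω
    simp only [Set.mem_setOf_eq] at hω
    rcases le_abs.mp hω with hcase | hcase
    · right
      simp only [hUdef, Set.mem_setOf_eq]
      refine le_abs.mpr (Or.inl ?_)
      have hab := hba n ω
      have hcomm : μ * (n:ℝ) = (n:ℝ) * μ := mul_comm _ _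
      linarith
    · left
      simp only [hBdef, Set.mem_setOf_eq]
      linarith
  calc P {ω | x * Real.sqrt n ≤ |b n ω - (n:ℝ) * μ|} ≤ P (B ∪ U) := measure_mono hsplit
    _ ≤ P B + P U := measure_union_le _ _
    _ ≤ ENNReal.ofReal ((Real.sqrt C' * A0 + Real.sqrt C') * Real.exp (-(c / 4) * x)) +
          ENNReal.ofReal (C * Real.exp (-(c / 4) * x)) := by
        refine add_le_add ?_ ?_
        · rw [hqeq]; exact ENNReal.ofReal_le_ofReal hqb
        · refine hU.trans (ENNReal.ofReal_le_ofReal ?_)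
          have hee : -c * x ≤ -(c / 4) * x := by nlinarith
          exact mul_le_mul_of_nonneg_left (Real.exp_le_exp.mpr hee) hC.le
    _ ≤ ENNReal.ofReal (C₁ * Real.exp (-(c / 4) * x)) := by
        rw [← ENNReal.ofReal_add (by positivity) (by positivity)]
        refine ENNReal.ofReal_le_ofReal ?_
        have h1 : (Real.sqrt C' * A0 + Real.sqrt C') * Real.exp (-(c / 4) * x) +
            C * Real.exp (-(c / 4) * x) =
            (Real.sqrt C' * A0 + Real.sqrt C' + C) * Real.exp (-(c / 4) * x) := by ring
        rw [h1]
        exact mul_le_mul_of_nonneg_right hC₁a (Real.exp_pos _).le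
end

section
/- Let a_{0,n}: Ω → R be coordinatewise nondecreasing in the edge passage times. Fix a finite edge set U_k, let D_k⁻ be the event that every edge in U_k has value 1 and D_k⁺ the event that every edge in U_k has value > z (z > 1). Suppose ω is a configuration whose (unique selected) optimal path γ_n uses at least one edge e ∈ U_k with t(e) > z. Then H_k(ω) = a⁺_{0,n}(ω̂_k) − a⁻_{0,n}(ω̂_k) ≥ z − 1. -/
open MeasureTheory

/-- Nearest-neighbor adjacency in `ℤ²`. -/
def LatAdj (a b : ℤ × ℤ) : Prop := |a.1 - b.1| + |a.2 - b.2| = 1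

/-- A self-avoiding lattice path in `ℤ²`. -/
def IsSAPath (γ : List (ℤ × ℤ)) : Prop := γ.Chain' LatAdj ∧ γ.Nodup

/-- Directed edges of `ℤ²` (as ordered pairs of endpoints). -/
abbrev Edge : Type := (ℤ × ℤ) × (ℤ × ℤ)

/-- The passage time of a path under the configuration `ω : Edge → ℝ`. -/
def PathTime (ω : Edge → ℝ) (γ : List (ℤ × ℤ)) : ℝ :=
  ((γ.zip γ.tail).map ω).sum

/-- The first passage time `a_{0,n}` from `(0,0)` to `(n,0)`. -/
noncomputable def aTime (n : ℕ) (ω : Edge → ℝ) : ℝ :=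
  sInf {T | ∃ γ : List (ℤ × ℤ), IsSAPath γ ∧ γ.head? = some (0, 0) ∧
    γ.getLast? = some ((n : ℤ), 0) ∧ T = PathTime ω γ}

/- Replace the configuration `ω` on the edge set `U` by `ω'`. -/
open Classical in
noncomputable def piece (U : Set Edge) (ω' ω : Edge → ℝ) : Edge → ℝ :=
  fun e => if e ∈ U then ω' e else ω e

private lemma sum_gap {L : List Edge} {f g : Edge → ℝ}
    (h : ∀ e ∈ L, f e ≤ g e) {e₀ : Edge} (he : e₀ ∈ L) {d : ℝ}
    (hd : f e₀ + d ≤ g e₀) : (L.map f).sum + d ≤ (L.map g).sum := by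
  obtain ⟨s, t, rfl⟩ := List.append_of_mem he
  have hs : (s.map f).sum ≤ (s.map g).sum :=
    List.sum_le_sum fun e he => h e (by simp [he])
  have ht : (t.map f).sum ≤ (t.map g).sum :=
    List.sum_le_sum fun e he => h e (by simp [he])
  simp only [List.map_append, List.sum_append, List.map_cons, List.sum_cons]
  linarith

private lemma pathTime_nonneg {f : Edge → ℝ} (h : ∀ e, 0 ≤ f e)
    (γ : List (ℤ × ℤ)) : 0 ≤ PathTime f γ :=
  List.sum_nonneg (by rintro x hx; obtain ⟨e, -, rfl⟩ := List.mem_map.1 hx; exact h e)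

private lemma aTime_le {n : ℕ} {f : Edge → ℝ} (h : ∀ e, 0 ≤ f e)
    {γ : List (ℤ × ℤ)} (h1 : IsSAPath γ) (h2 : γ.head? = some (0,0))
    (h3 : γ.getLast? = some ((n:ℤ), 0)) : aTime n f ≤ PathTime f γ :=
  csInf_le ⟨0, by rintro y ⟨γ', -, -, -, rfl⟩; exact pathTime_nonneg h γ'⟩
    ⟨γ, h1, h2, h3, rfl⟩

/-- If the (selected) optimal path `γ` for `a_{0,n}(ω)` uses an edge of `U` with
`ω e > z`, then `H_k(ω) = a⁺_{0,n}(ω̂_k) − a⁻_{0,n}(ω̂_k) ≥ z − 1`, where `a⁺` is the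
infimum over configurations with all `U`-edges `> z` and `a⁻` the supremum over
configurations with all `U`-edges equal to `1`. -/
theorem stmt18 (n : ℕ) (U : Set Edge) (hU : U.Finite)
    (z : ℝ) (hz : 1 < z)
    (ω : Edge → ℝ) (hω1 : ∀ e, 1 ≤ ω e)
    (hωsym : ∀ a b : ℤ × ℤ, ω (a, b) = ω (b, a))
    (γ : List (ℤ × ℤ)) (hγ : IsSAPath γ)
    (hhead : γ.head? = some (0, 0)) (hlast : γ.getLast? = some ((n : ℤ), 0))
    (hopt : PathTime ω γ = aTime n ω)
    (huse : ∃ e ∈ γ.zip γ.tail, e ∈ U ∧ z < ω e) :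
    z - 1 ≤
      sInf {y | ∃ ω' : Edge → ℝ, (∀ e ∈ U, z < ω' e) ∧
          y = aTime n (piece U ω' ω)} -
        sSup {y | ∃ ω' : Edge → ℝ, (∀ e ∈ U, ω' e = 1) ∧
          y = aTime n (piece U ω' ω)} := by
  classical
  obtain ⟨e₀, he₀γ, he₀U, he₀z⟩ := huse
  set ωm : Edge → ℝ := piece U (fun _ => 1) ω with hωm
  have hωm1 : ∀ e, 1 ≤ ωm e := fun e => by
    simp only [hωm, piece]; split_ifs with h
    · exact le_refl 1
    · exact hω1 e
  have hωmγ : ∀ e ∈ γ.zip γ.tail, ωm e ≤ ω e := by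
    intro e _
    simp only [hωm, piece]; split_ifs with h
    · exact hω1 e
    · exact le_refl _
  have hgapγ : ωm e₀ + (z - 1) ≤ ω e₀ := by
    simp only [hωm, piece, if_pos he₀U]; linarith
  have h5 : PathTime ωm γ + (z - 1) ≤ PathTime ω γ := sum_gap hωmγ he₀γ hgapγ
  have h6 : aTime n ωm ≤ PathTime ωm γ :=
    aTime_le (fun e => le_trans zero_le_one (hωm1 e)) hγ hhead hlast
  have hpath_lb : ∀ (f : Edge → ℝ), (∀ e ∈ U, z < f e) →
      ∀ γ' : List (ℤ × ℤ), IsSAPath γ' → γ'.head? = some (0,0) →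
      γ'.getLast? = some ((n:ℤ), 0) →
      aTime n ωm + (z - 1) ≤ PathTime (piece U f ω) γ' := by
    intro f hf γ' h1 h2 h3
    by_cases hcase : ∃ e ∈ γ'.zip γ'.tail, e ∈ U
    · obtain ⟨e, heL, heU⟩ := hcase
      have hle : ∀ e' ∈ γ'.zip γ'.tail, ωm e' ≤ piece U f ω e' := by
        intro e' _
        simp only [hωm, piece]
        split_ifs with h
        · linarith [hf e' h]
        · exact le_refl _
      have hgap : ωm e + (z - 1) ≤ piece U f ω e := by
        simp only [hωm, piece, if_pos heU]; linarith [hf e heU]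
      have hsg := sum_gap hle heL hgap
      have hA : aTime n ωm ≤ PathTime ωm γ' :=
        aTime_le (fun e => le_trans zero_le_one (hωm1 e)) h1 h2 h3
      unfold PathTime at hsg hA ⊢
      linarith
    · push_neg at hcase
      have heq : PathTime (piece U f ω) γ' = PathTime ω γ' := by
        unfold PathTime
        congr 1
        apply List.map_congr_left
        intro e he
        simp [piece, hcase e he]
      have h4 : aTime n ω ≤ PathTime ω γ' :=
        aTime_le (fun e => le_trans zero_le_one (hω1 e)) h1 h2 h3
      rw [heq]
      linarith
  have hsup : sSup {y | ∃ ω' : Edge → ℝ, (∀ e ∈ U, ω' e = 1) ∧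
      y = aTime n (piece U ω' ω)} = aTime n ωm := by
    have hset : {y | ∃ ω' : Edge → ℝ, (∀ e ∈ U, ω' e = 1) ∧
        y = aTime n (piece U ω' ω)} = {aTime n ωm} := by
      ext y
      constructor
      · rintro ⟨ω', h', rfl⟩
        have hpc : piece U ω' ω = ωm := by
          funext e
          simp only [hωm, piece]
          split_ifs with h
          · exact h' e h
          · rfl
        simp [hpc]
      · rintro rfl
        exact ⟨fun _ => 1, fun _ _ => rfl, congrArg (aTime n) hωm⟩
    rw [hset, csSup_singleton]
  rw [hsup]
  have hinf : aTime n ωm + (z - 1) ≤ sInf {y | ∃ ω' : Edge → ℝ, (∀ e ∈ U, z < ω' e) ∧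
      y = aTime n (piece U ω' ω)} := by
    apply le_csInf
    · exact ⟨aTime n (piece U (fun _ => z + 1) ω), fun _ => z + 1,
        fun e _ => lt_add_of_pos_right z one_pos, rfl⟩
    · rintro y ⟨ω', h', rfl⟩
      unfold aTime
      apply le_csInf
      · exact ⟨_, γ, hγ, hhead, hlast, rfl⟩
      · rintro T ⟨γ', h1, h2, h3, rfl⟩
        exact hpath_lb ω' h' γ' h1 h2 h3
  linarith
end
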